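/- Suppose P1, P2, P3, P4 are column-stochastic. Let p, q ∈ ℝ^k and let Δ be a real k×k matrix. Let A_⊥ denote the unfolding A built from middle matrix p qᵀ and let A denote the unfolding built from middle matrix p qᵀ + Δ (with the same P1, P2, P3, P4). Then | ‖A‖* − ‖A_⊥‖* | ≤ k · ‖Δ‖_F. -/

import Mathlib

/-- The nuclear norm of a real matrix: the sum of its singular values. -/
noncomputable def nuclearNorm {α β : Type*} [Fintype α] [Fintype β] [DecidableEq β]
    (M : Matrix α β ℝ) : ℝ :=
  ∑ i, Real.sqrt ((show (Matrix.transpose M * M).IsHermitian by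
    simpa [Matrix.conjTranspose_eq_transpose_of_trivial] using
      Matrix.isHermitian_conjTranspose_mul_self M).eigenvalues i)

/-- The Frobenius norm of a real matrix. -/
noncomputable def frobeniusNorm {α β : Type*} [Fintype α] [Fintype β] (M : Matrix α β ℝ) : ℝ :=
  Real.sqrt (∑ i, ∑ j, (M i j) ^ 2)

/-- A matrix is column-stochastic if its entries are nonnegative and each column sums to 1. -/
def colStochastic {α β : Type*} [Fintype α] (M : Matrix α β ℝ) : Prop :=
  (∀ i j, 0 ≤ M i j) ∧ ∀ j, ∑ i, M i j = 1

/-- The unfolding `A` built from middle matrix `Mmid`. -/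
def unfoldA {n k : ℕ} (P1 P2 P3 P4 : Matrix (Fin n) (Fin k) ℝ)
    (Mmid : Matrix (Fin k) (Fin k) ℝ) : Matrix (Fin n × Fin n) (Fin n × Fin n) ℝ :=
  Matrix.of fun r c => ∑ h, ∑ g, P1 r.1 h * P2 r.2 h * Mmid h g * P3 c.1 g * P4 c.2 g

/-! The nuclear norm is dual to the operator norm: `‖M‖* = max {tr (Xᵀ M) : ‖X‖ ≤ 1}`, the maximum
being attained at `X = M V Σ⁺ Vᵀ`, where `Mᵀ M = V Σ² Vᵀ`. Hence it is a seminorm, and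
`| ‖A‖* − ‖A_⊥‖* | ≤ ‖A − A_⊥‖*`. Now `A − A_⊥` is the unfolding built from `Δ`, namely
`∑ h g, Δ h g • a_h b_gᵀ` with `a_h = P1(·,h) ⊗ P2(·,h)` and `b_g = P3(·,g) ⊗ P4(·,g)`.
Column-stochasticity gives `‖a_h‖, ‖b_g‖ ≤ 1`, so `‖A − A_⊥‖* ≤ ∑ |Δ h g| ≤ k ‖Δ‖_F` by
Cauchy–Schwarz. -/

open Matrix Finset

section NuclearNorm

variable {α β : Type*} [Fintype α] [Fintype β]

theorem dotProduct_le_sqrt_mul_sqrt {ι : Type*} [Fintype ι] (u v : ι → ℝ) :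
    u ⬝ᵥ v ≤ √(u ⬝ᵥ u) * √(v ⬝ᵥ v) := by
  simpa only [dotProduct, sq] using Real.sum_mul_le_sqrt_mul_sqrt univ u v

def IsContraction (X : Matrix α β ℝ) : Prop :=
  ∀ w : β → ℝ, X *ᵥ w ⬝ᵥ X *ᵥ w ≤ w ⬝ᵥ w

theorem IsContraction.neg {X : Matrix α β ℝ} (hX : IsContraction X) : IsContraction (-X) := by
  intro w
  simpa only [neg_mulVec, neg_dotProduct_neg] using hX w

theorem IsContraction.mul {γ : Type*} [Fintype γ] {X : Matrix α β ℝ} {Y : Matrix β γ ℝ}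
    (hX : IsContraction X) (hY : IsContraction Y) : IsContraction (X * Y) := fun w => by
  rw [← mulVec_mulVec]
  exact (hX _).trans (hY w)

theorem isContraction_of_transpose_mul_self_eq_diagonal [DecidableEq β] {X : Matrix α β ℝ}
    {e : β → ℝ} (hX : Xᵀ * X = diagonal e) (he : ∀ i, e i ≤ 1) : IsContraction X := fun w => by
  have hgram : X *ᵥ w ⬝ᵥ X *ᵥ w = ∑ i, e i * (w i * w i) := by
    rw [dotProduct_mulVec, ← vecMul_transpose, vecMul_vecMul, hX]
    simp only [dotProduct, vecMul_diagonal]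
    exact sum_congr rfl fun i _ => by ring
  rw [hgram]
  exact sum_le_sum fun i _ => mul_le_of_le_one_left (mul_self_nonneg _) (he i)

theorem exists_orthogonal_nuclearNorm_eq_sum_sqrt [DecidableEq β] (M : Matrix α β ℝ) :
    ∃ (U : Matrix β β ℝ) (d : β → ℝ), Uᵀ * U = 1 ∧ U * Uᵀ = 1 ∧
      (M * U)ᵀ * (M * U) = diagonal d ∧ nuclearNorm M = ∑ i, √(d i) := by
  have hH : (Mᵀ * M).IsHermitian := by
    simpa [conjTranspose_eq_transpose_of_trivial] using isHermitian_conjTranspose_mul_self M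
  set U : Matrix β β ℝ := (hH.eigenvectorUnitary : Matrix β β ℝ)
  have hstar : star U = Uᵀ := by rw [star_eq_conjTranspose, conjTranspose_eq_transpose_of_trivial]
  refine ⟨U, hH.eigenvalues, ?_, ?_, ?_, rfl⟩
  · rw [← hstar]; exact Unitary.coe_star_mul_self _
  · rw [← hstar]; exact Unitary.coe_mul_star_self _
  · have h := hH.conjStarAlgAut_star_eigenvectorUnitary
    rw [Unitary.conjStarAlgAut_star_apply, RCLike.ofReal_real_eq_id, Function.id_comp] at h
    rw [← h, transpose_mul, Matrix.mul_assoc, ← Matrix.mul_assoc Mᵀ, ← Matrix.mul_assoc, ← hstar]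

theorem trace_transpose_mul_le_nuclearNorm [DecidableEq β] {X : Matrix α β ℝ}
    (hX : IsContraction X) (M : Matrix α β ℝ) : (Xᵀ * M).trace ≤ nuclearNorm M := by
  obtain ⟨U, d, hUU, hUU', hd, hM⟩ := exists_orthogonal_nuclearNorm_eq_sum_sqrt M
  have hcol : ∀ i, (M * U)ᵀ i ⬝ᵥ (M * U)ᵀ i = d i := fun i =>
    (congrFun₂ hd i i).trans (diagonal_apply_eq d i)
  have hU : ∀ i, Uᵀ i ⬝ᵥ Uᵀ i = 1 := fun i => (congrFun₂ hUU i i).trans (one_apply_eq i)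
  have htrace : (Xᵀ * M).trace = ∑ i, X *ᵥ Uᵀ i ⬝ᵥ (M * U)ᵀ i := by
    have : ((X * U)ᵀ * (M * U)).trace = (Xᵀ * M).trace := by
      rw [transpose_mul, Matrix.mul_assoc, trace_mul_comm, Matrix.mul_assoc, Matrix.mul_assoc,
        hUU', Matrix.mul_one]
    exact this.symm
  rw [htrace, hM]
  gcongr with i
  calc _ ≤ √(X *ᵥ Uᵀ i ⬝ᵥ X *ᵥ Uᵀ i) * √((M * U)ᵀ i ⬝ᵥ (M * U)ᵀ i) :=
        dotProduct_le_sqrt_mul_sqrt _ _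
    _ ≤ √(Uᵀ i ⬝ᵥ Uᵀ i) * √(d i) := by rw [hcol]; gcongr; exact hX _
    _ = √(d i) := by rw [hU, Real.sqrt_one, one_mul]

theorem exists_isContraction_trace_eq_nuclearNorm [DecidableEq β] (M : Matrix α β ℝ) :
    ∃ X : Matrix α β ℝ, IsContraction X ∧ (Xᵀ * M).trace = nuclearNorm M := by
  obtain ⟨U, d, hUU, hUU', hd, hM⟩ := exists_orthogonal_nuclearNorm_eq_sum_sqrt M
  -- `D` inverts the singular values, and (as `0⁻¹ = 0`) kills the kernel of `M`.
  set D : Matrix β β ℝ := diagonal fun i => (√(d i))⁻¹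
  have hMUD : (M * U * D)ᵀ * (M * U * D) = diagonal fun i => d i / √(d i) / √(d i) := by
    rw [transpose_mul, Matrix.mul_assoc, ← Matrix.mul_assoc (M * U)ᵀ, hd, diagonal_transpose,
      diagonal_mul_diagonal, diagonal_mul_diagonal]
    congr 1; funext i
    ring
  refine ⟨M * U * D * Uᵀ, ?_, ?_⟩
  · refine (isContraction_of_transpose_mul_self_eq_diagonal hMUD fun i => by
      rw [Real.div_sqrt]; exact div_self_le_one _).mul
      (isContraction_of_transpose_mul_self_eq_diagonal (e := 1) ?_ fun _ => le_rfl)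
    rw [transpose_transpose, hUU']; exact diagonal_one.symm
  · have : (M * U * D * Uᵀ)ᵀ * M = U * (D * (M * U)ᵀ * M) := by
      simp only [transpose_mul, transpose_transpose, diagonal_transpose, D, Matrix.mul_assoc]
    rw [this, trace_mul_comm, Matrix.mul_assoc, Matrix.mul_assoc, hd,
      diagonal_mul_diagonal, trace_diagonal, hM]
    exact sum_congr rfl fun i _ => by rw [← div_eq_inv_mul, Real.div_sqrt]

variable [DecidableEq β]

theorem nuclearNorm_le_of_forall_trace_le {M : Matrix α β ℝ} {c : ℝ}
    (h : ∀ X : Matrix α β ℝ, IsContraction X → (Xᵀ * M).trace ≤ c) : nuclearNorm M ≤ c := by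
  obtain ⟨X, hX, hXM⟩ := exists_isContraction_trace_eq_nuclearNorm M
  exact hXM ▸ h X hX

theorem nuclearNorm_add_le (M N : Matrix α β ℝ) :
    nuclearNorm (M + N) ≤ nuclearNorm M + nuclearNorm N :=
  nuclearNorm_le_of_forall_trace_le fun X hX => by
    rw [Matrix.mul_add, trace_add]
    exact add_le_add (trace_transpose_mul_le_nuclearNorm hX M)
      (trace_transpose_mul_le_nuclearNorm hX N)

theorem nuclearNorm_smul_le (c : ℝ) (M : Matrix α β ℝ) :
    nuclearNorm (c • M) ≤ |c| * nuclearNorm M :=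
  nuclearNorm_le_of_forall_trace_le fun X hX => by
    have hle : |(Xᵀ * M).trace| ≤ nuclearNorm M := by
      refine abs_le.mpr ⟨?_, trace_transpose_mul_le_nuclearNorm hX M⟩
      have := trace_transpose_mul_le_nuclearNorm hX.neg M
      rw [transpose_neg, Matrix.neg_mul, trace_neg] at this
      linarith
    rw [Matrix.mul_smul, trace_smul, smul_eq_mul]
    calc c * (Xᵀ * M).trace ≤ |c * (Xᵀ * M).trace| := le_abs_self _
      _ = |c| * |(Xᵀ * M).trace| := abs_mul _ _
      _ ≤ |c| * nuclearNorm M := by gcongr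

theorem nuclearNorm_neg (M : Matrix α β ℝ) : nuclearNorm (-M) = nuclearNorm M := by
  have key : ∀ N : Matrix α β ℝ, nuclearNorm (-N) ≤ nuclearNorm N := fun N => by
    simpa using nuclearNorm_smul_le (-1) N
  exact le_antisymm (key M) (by simpa using key (-M))

theorem abs_nuclearNorm_sub_nuclearNorm_le (M N : Matrix α β ℝ) :
    |nuclearNorm M - nuclearNorm N| ≤ nuclearNorm (M - N) := by
  have hM := nuclearNorm_add_le N (M - N)
  have hN := nuclearNorm_add_le M (N - M)
  rw [add_sub_cancel] at hM hN
  rw [← neg_sub, nuclearNorm_neg] at hN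
  exact abs_sub_le_iff.mpr ⟨by linarith, by linarith⟩

theorem nuclearNorm_sum_le {ι : Type*} (s : Finset ι) (M : ι → Matrix α β ℝ) :
    nuclearNorm (∑ i ∈ s, M i) ≤ ∑ i ∈ s, nuclearNorm (M i) :=
  le_sum_of_subadditive nuclearNorm
    (nuclearNorm_le_of_forall_trace_le fun X _ => by simp) nuclearNorm_add_le s M

theorem nuclearNorm_vecMulVec_le (u : α → ℝ) (v : β → ℝ) :
    nuclearNorm (vecMulVec u v) ≤ √(u ⬝ᵥ u) * √(v ⬝ᵥ v) :=
  nuclearNorm_le_of_forall_trace_le fun X hX => by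
    rw [mul_vecMulVec, trace_vecMulVec, mulVec_transpose, ← dotProduct_mulVec]
    calc _ ≤ √(u ⬝ᵥ u) * √(X *ᵥ v ⬝ᵥ X *ᵥ v) := dotProduct_le_sqrt_mul_sqrt _ _
      _ ≤ √(u ⬝ᵥ u) * √(v ⬝ᵥ v) := by gcongr; exact hX v

end NuclearNorm

theorem colStochastic.col_dotProduct_self_le_one {α β : Type*} [Fintype α] {P : Matrix α β ℝ}
    (hP : colStochastic P) (j : β) : Pᵀ j ⬝ᵥ Pᵀ j ≤ 1 := by
  have hle : ∀ i, P i j ≤ 1 := fun i =>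
    hP.2 j ▸ single_le_sum (f := fun i => P i j) (fun i _ => hP.1 i j) (mem_univ i)
  calc Pᵀ j ⬝ᵥ Pᵀ j ≤ ∑ i, P i j :=
        sum_le_sum fun i _ => mul_le_of_le_one_left (hP.1 i j) (hle i)
    _ = 1 := hP.2 j

theorem dotProduct_self_prod {α α' : Type*} [Fintype α] [Fintype α'] (u : α → ℝ) (v : α' → ℝ) :
    (fun r : α × α' => u r.1 * v r.2) ⬝ᵥ (fun r => u r.1 * v r.2) = (u ⬝ᵥ u) * (v ⬝ᵥ v) := by
  simp only [dotProduct, Fintype.sum_prod_type, sum_mul_sum]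
  exact sum_congr rfl fun _ _ => sum_congr rfl fun _ _ => by ring

section Unfolding

variable {n k : ℕ} (P1 P2 P3 P4 : Matrix (Fin n) (Fin k) ℝ)

theorem unfoldA_add (M N : Matrix (Fin k) (Fin k) ℝ) :
    unfoldA P1 P2 P3 P4 (M + N) = unfoldA P1 P2 P3 P4 M + unfoldA P1 P2 P3 P4 N := by
  ext r c
  simp only [unfoldA, of_apply, Matrix.add_apply, ← sum_add_distrib]
  exact sum_congr rfl fun _ _ => sum_congr rfl fun _ _ => by ring

theorem unfoldA_eq_sum_vecMulVec (M : Matrix (Fin k) (Fin k) ℝ) :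
    unfoldA P1 P2 P3 P4 M = ∑ h, ∑ g, M h g •
      vecMulVec (fun r => P1 r.1 h * P2 r.2 h) (fun c => P3 c.1 g * P4 c.2 g) := by
  ext r c
  simp only [unfoldA, of_apply, Matrix.sum_apply, Matrix.smul_apply, vecMulVec_apply, smul_eq_mul]
  exact sum_congr rfl fun _ _ => sum_congr rfl fun _ _ => by ring

variable {P1 P2 P3 P4}

theorem nuclearNorm_unfoldA_le (h1 : colStochastic P1) (h2 : colStochastic P2)
    (h3 : colStochastic P3) (h4 : colStochastic P4) (M : Matrix (Fin k) (Fin k) ℝ) :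
    nuclearNorm (unfoldA P1 P2 P3 P4 M) ≤ ∑ h, ∑ g, |M h g| := by
  have hcol : ∀ {P Q : Matrix (Fin n) (Fin k) ℝ}, colStochastic P → colStochastic Q → ∀ j,
      √((fun r : Fin n × Fin n => P r.1 j * Q r.2 j) ⬝ᵥ (fun r => P r.1 j * Q r.2 j)) ≤ 1 :=
    fun hP hQ j => Real.sqrt_le_one.mpr <| (dotProduct_self_prod _ _).trans_le <|
      mul_le_one₀ (hP.col_dotProduct_self_le_one j) (sum_nonneg fun _ _ => mul_self_nonneg _)
        (hQ.col_dotProduct_self_le_one j)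
  rw [unfoldA_eq_sum_vecMulVec]
  refine (nuclearNorm_sum_le _ _).trans <| sum_le_sum fun h _ =>
    (nuclearNorm_sum_le _ _).trans <| sum_le_sum fun g _ => ?_
  calc _ ≤ |M h g| * (√_ * √_) := (nuclearNorm_smul_le _ _).trans <|
        mul_le_mul_of_nonneg_left (nuclearNorm_vecMulVec_le _ _) (abs_nonneg _)
    _ ≤ |M h g| * (1 * 1) := by gcongr <;> exact hcol ‹_› ‹_› _
    _ = |M h g| := by rw [mul_one, mul_one]

end Unfolding

theorem sum_abs_le_card_mul_frobeniusNorm {α : Type*} [Fintype α] (M : Matrix α α ℝ) :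
    ∑ i, ∑ j, |M i j| ≤ Fintype.card α * frobeniusNorm M := by
  have h := Real.sum_mul_le_sqrt_mul_sqrt univ (fun p : α × α => |M p.1 p.2|) 1
  simp only [Pi.one_apply, mul_one, one_pow, sq_abs, sum_const, card_univ, Fintype.card_prod,
    nsmul_eq_mul, Fintype.sum_prod_type] at h
  rw [mul_comm, Nat.cast_mul, Real.sqrt_mul_self (Nat.cast_nonneg _)] at h
  exact h

theorem nuclearNorm_unfoldA_perturbation_general (n k : ℕ)
    (P1 P2 P3 P4 : Matrix (Fin n) (Fin k) ℝ)
    (h1 : colStochastic P1) (h2 : colStochastic P2)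
    (h3 : colStochastic P3) (h4 : colStochastic P4)
    (p q : Fin k → ℝ) (Δ : Matrix (Fin k) (Fin k) ℝ) :
    |nuclearNorm (unfoldA P1 P2 P3 P4 (Matrix.vecMulVec p q + Δ)) -
        nuclearNorm (unfoldA P1 P2 P3 P4 (Matrix.vecMulVec p q))| ≤
      (k : ℝ) * frobeniusNorm Δ := by
  refine (abs_nuclearNorm_sub_nuclearNorm_le _ _).trans ?_
  rw [unfoldA_add, add_sub_cancel_left]
  calc nuclearNorm (unfoldA P1 P2 P3 P4 Δ) ≤ ∑ h, ∑ g, |Δ h g| :=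
        nuclearNorm_unfoldA_le h1 h2 h3 h4 Δ
    _ ≤ k * frobeniusNorm Δ := by simpa using sum_abs_le_card_mul_frobeniusNorm Δ

/-- Perturbation bound for the unfolding `A`: `| ‖A‖* − ‖A_⊥‖* | ≤ k ‖Δ‖_F`. -/
theorem nuclearNorm_unfoldA_perturbation (n k : ℕ) (hn : 0 < n) (hk : 0 < k)
    (P1 P2 P3 P4 : Matrix (Fin n) (Fin k) ℝ)
    (h1 : colStochastic P1) (h2 : colStochastic P2)
    (h3 : colStochastic P3) (h4 : colStochastic P4)
    (p q : Fin k → ℝ) (Δ : Matrix (Fin k) (Fin k) ℝ) :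
    |nuclearNorm (unfoldA P1 P2 P3 P4 (Matrix.vecMulVec p q + Δ)) -
        nuclearNorm (unfoldA P1 P2 P3 P4 (Matrix.vecMulVec p q))| ≤
      (k : ℝ) * frobeniusNorm Δ :=
  nuclearNorm_unfoldA_perturbation_general n k P1 P2 P3 P4 h1 h2 h3 h4 p q Δ
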